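/- For every nondegenerate interval I ⊆ ℝ and every θ ∈ [0,1] there exists a max-family (f_n : I → ℝ)_{n=1}^∞ such that dim_H I_f = θ and I_f can be decomposed as I_f = A ∪ B where A is nowhere dense in I and B has Hausdorff dimension zero. -/

import Mathlib

/-!
Choose a closed set `K ⊆ I` with empty interior and `dim_H K = θ`: a point, a Cantor set with
ratio `r = 2^(-1/θ)`, or a Cantor set of positive measure. For the Cantor set, `dim_H K ≤ θ`
comes from the covers by `2^n` intervals of length `r^n`, and `dim_H K ≥ θ` from the map
sending a point of `K` to the real number with the same binary digits, which is
`θ`-Hölder from `K` onto `[0, 1]`.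

With a dense sequence `q` and the kernel `φ_n(t) = n / (1 + n t)`, take
`f_n(x) = φ_n(dist(x, K)) + ∑_{k<n} 4^(-k) φ_n(|x - q_k|)`. The spike at `q_k` has
integral of order `4^(-k) log n` over any interval to the right of `q_k`, so every interval
integral diverges, and `f_n ≥ n` on `K`. Since `φ_n(t) ≤ 1/t`, at a point `x ∉ K` with
`|x - q_k| > 2^(-k)` for all large `k` the sequence stays below
`dist(x, K)⁻¹ + ∑_k 4^(-k) |x - q_k|⁻¹ < ∞`. Hence `I_f \ K` lies in the union of the
countable set `{q_k}` and the limsup set of the balls `B(q_k, 2^(-k))`, which has dimension `0`.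
-/

open Set Filter Topology MeasureTheory

/-- `limSet I f` is the set `I_f = {x ∈ I : lim_{n→∞} f_n(x) = +∞}`. -/
def limSet (I : Set ℝ) (f : ℕ → ℝ → ℝ) : Set ℝ :=
  {x ∈ I | Tendsto (fun n => f n x) atTop atTop}

/-- A max-family on `I`: a nondecreasing sequence of continuous functions whose integrals
over every nondegenerate subinterval of `I` tend to `+∞`. -/
def IsMaxFamily (I : Set ℝ) (f : ℕ → ℝ → ℝ) : Prop :=
  (∀ n, ContinuousOn (f n) I) ∧
  (∀ n, ∀ x ∈ I, f n x ≤ f (n + 1) x) ∧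
  (∀ x ∈ I, ∀ y ∈ I, x < y →
    Tendsto (fun n => ∫ t in x..y, f n t) atTop atTop)

open Metric

open scoped NNReal ENNReal

theorem dimH_range_le_of_dist_le {ι X Y : Type*} [MetricSpace X] [MetricSpace Y]
    {F : ι → X} {G : ι → Y} {C r : ℝ≥0} (hr : 0 < r)
    (h : ∀ i j, dist (F i) (F j) ≤ C * dist (G i) (G j) ^ (r : ℝ)) :
    dimH (range F) ≤ dimH (range G) / r := by
  rcases isEmpty_or_nonempty ι with hι | hι
  · simp [range_eq_empty]
  have hF : ∀ i j, edist (F i) (F j) ≤ C * edist (G i) (G j) ^ (r : ℝ) := fun i j => by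
    rw [edist_dist, edist_dist, ENNReal.ofReal_rpow_of_nonneg dist_nonneg r.coe_nonneg,
      ← ENNReal.ofReal_coe_nnreal, ← ENNReal.ofReal_mul C.coe_nonneg]
    exact ENNReal.ofReal_le_ofReal (h i j)
  set φ : Y → X := fun y => F (Function.invFun G y)
  have hG : ∀ i, G (Function.invFun G (G i)) = G i := fun i => Function.invFun_eq ⟨i, rfl⟩
  have hφ : HolderOnWith C r φ (range G) := by
    rintro _ ⟨i, rfl⟩ _ ⟨j, rfl⟩
    simpa only [φ, hG] using hF (Function.invFun G (G i)) (Function.invFun G (G j))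
  have hsub : range F ⊆ φ '' range G := by
    rintro _ ⟨i, rfl⟩
    refine ⟨G i, mem_range_self i, edist_le_zero.1 ?_⟩
    simpa [φ, hG, ENNReal.zero_rpow_of_pos (NNReal.coe_pos.2 hr)] using
      hF (Function.invFun G (G i)) i
  exact (dimH_mono hsub).trans (hφ.dimH_image_le hr)

theorem dimH_image_const_add_mul (a : ℝ) {c : ℝ} (hc : c ≠ 0) (s : Set ℝ) :
    dimH ((fun x => a + c * x) '' s) = dimH s := by
  have hdist : ∀ x y, dist (a + c * x) (a + c * y) = ‖c‖₊ * dist x y := fun x y => by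
    rw [Real.dist_eq, Real.dist_eq, add_sub_add_left_eq_sub, ← mul_sub, abs_mul, coe_nnnorm,
      Real.norm_eq_abs]
  refine le_antisymm ((LipschitzWith.of_dist_le_mul fun x y => (hdist x y).le).dimH_image_le s)
    ((AntilipschitzWith.of_le_mul_dist (K := ‖c‖₊⁻¹) fun x y => ?_).le_dimH_image s)
  rw [hdist, NNReal.coe_inv, inv_mul_cancel_left₀ (by simpa using hc)]

theorem Real.dimH_eq_one_of_volume_ne_zero {s : Set ℝ} (hs : volume s ≠ 0) : dimH s = 1 := by
  refine le_antisymm ((dimH_mono (subset_univ s)).trans Real.dimH_univ.le) ?_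
  have : μH[(1 : ℝ≥0)] s ≠ 0 := by rwa [NNReal.coe_one, hausdorffMeasure_real]
  simpa using le_dimH_of_hausdorffMeasure_ne_zero this

theorem hausdorffMeasure_limsup_closedBall_two_inv_pow {X : Type*} [MetricSpace X]
    [MeasurableSpace X] [BorelSpace X] (c : ℕ → X) {d : ℝ} (hd : 0 < d) :
    μH[d] (limsup (fun k => closedBall (c k) ((2 : ℝ)⁻¹ ^ k)) atTop) = 0 := by
  set f : ℕ → ℝ := fun k => (2 * (2 : ℝ)⁻¹ ^ k) ^ d
  have hf : Summable f := by
    have hρ : (2 : ℝ)⁻¹ ^ d < 1 := Real.rpow_lt_one (by norm_num) (by norm_num) hd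
    refine ((summable_geometric_of_lt_one (by positivity) hρ).mul_left (2 ^ d)).congr
      fun k => ?_
    simp only [f]
    rw [Real.mul_rpow (by norm_num) (by positivity), Real.rpow_pow_comm (by norm_num)]
  have hdiam : ∀ k, ediam (closedBall (c k) ((2 : ℝ)⁻¹ ^ k)) ≤ ENNReal.ofReal (2 * 2⁻¹ ^ k) :=
    fun k => ediam_le_of_forall_dist_le fun x hx y hy => by
      linarith [dist_triangle_right x y (c k), mem_closedBall.1 hx, mem_closedBall.1 hy]
  have hcover : ∀ N, limsup (fun k => closedBall (c k) ((2 : ℝ)⁻¹ ^ k)) atTop ⊆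
      ⋃ k, closedBall (c (k + N)) ((2 : ℝ)⁻¹ ^ (k + N)) := fun N x hx => by
    obtain ⟨m, hm, hxm⟩ := frequently_atTop.1 (mem_limsup_iff_frequently_mem.1 hx) N
    exact mem_iUnion.2 ⟨m - N, by rwa [Nat.sub_add_cancel hm]⟩
  have hr : Tendsto (fun N => ENNReal.ofReal (2 * 2⁻¹ ^ N)) atTop (𝓝 0) := by
    simpa using ENNReal.tendsto_ofReal
      ((tendsto_pow_atTop_nhds_zero_of_lt_one (r := (2 : ℝ)⁻¹) (by norm_num)
        (by norm_num)).const_mul 2)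
  have hbound := Measure.hausdorffMeasure_le_liminf_tsum d _ _ hr
    (fun N k => closedBall (c (k + N)) ((2 : ℝ)⁻¹ ^ (k + N)))
    (Eventually.of_forall fun N k => (hdiam (k + N)).trans (ENNReal.ofReal_le_ofReal
      (mul_le_mul_of_nonneg_left (pow_le_pow_of_le_one (by norm_num) (by norm_num)
        (Nat.le_add_left N k)) two_pos.le)))
    (Eventually.of_forall hcover)
  have htail : Tendsto (fun N => ∑' k, ENNReal.ofReal (f (k + N))) atTop (𝓝 0) := by
    refine ENNReal.tendsto_sum_nat_add (fun k => ENNReal.ofReal (f k)) ?_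
    rw [← ENNReal.ofReal_tsum_of_nonneg (fun k => by positivity) hf]
    exact ENNReal.ofReal_ne_top
  refine le_antisymm (hbound.trans ?_) zero_le
  rw [← htail.liminf_eq]
  refine liminf_le_liminf (Eventually.of_forall fun N => ENNReal.tsum_le_tsum fun k => ?_)
  rw [← ENNReal.ofReal_rpow_of_nonneg (by positivity) hd.le]
  exact ENNReal.rpow_le_rpow (hdiam (k + N)) hd.le

theorem dimH_limsup_closedBall_two_inv_pow {X : Type*} [MetricSpace X] (c : ℕ → X) :
    dimH (limsup (fun k => closedBall (c k) ((2 : ℝ)⁻¹ ^ k)) atTop) = 0 := by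
  borelize X
  refine nonpos_iff_eq_zero.1 (dimH_le fun d hd => ?_)
  by_contra! hd0
  rw [hausdorffMeasure_limsup_closedBall_two_inv_pow c (by exact_mod_cast hd0)] at hd
  exact ENNReal.zero_ne_top hd

theorem IsNowhereDense.preimage_val {X : Type*} [TopologicalSpace X] {I K : Set X}
    (hI : I ⊆ closure (interior I)) (hK : IsNowhereDense K) :
    IsNowhereDense (Subtype.val ⁻¹' K : Set I) := by
  refine IsNowhereDense.mono (preimage_mono subset_closure) ?_
  rw [(isClosed_closure.preimage continuous_subtype_val).isNowhereDense_iff,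
    interior_eq_empty_iff_dense_compl, ← preimage_compl, Subtype.dense_iff,
    image_preimage_eq_inter_range, Subtype.range_coe]
  have hdense : Dense (closure K)ᶜ := interior_eq_empty_iff_dense_compl.1 hK
  calc I ⊆ closure (interior I) := hI
    _ ⊆ closure (interior I ∩ (closure K)ᶜ) :=
        closure_minimal (hdense.open_subset_closure_inter isOpen_interior) isClosed_closure
    _ ⊆ closure ((closure K)ᶜ ∩ I) :=
        closure_mono fun x hx => ⟨hx.2, interior_subset hx.1⟩

theorem Set.OrdConnected.subset_closure_interior {I : Set ℝ} (hI : I.OrdConnected)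
    (hInt : I.Nontrivial) : I ⊆ closure (interior I) := by
  obtain ⟨a, haI, b, hbI, hab⟩ := hInt.exists_lt
  rw [Convex.closure_interior_eq_closure_of_nonempty_interior (𝕜 := ℝ) hI.convex]
  · exact subset_closure
  · refine ⟨(a + b) / 2, interior_mono (hI.out haI hbI) ?_⟩
    rw [interior_Icc]
    constructor <;> linarith

noncomputable def cantorMap (r : ℝ) (d : ℕ → Fin 2) : ℝ :=
  ∑' i, (1 - r) * r ^ i * ((d i : ℕ) : ℝ)

section CantorMap

variable {r : ℝ} (hr₀ : 0 ≤ r) (hr₁ : r < 1)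
include hr₀ hr₁

theorem cantorTerm_mem_Icc (d : ℕ → Fin 2) (i : ℕ) :
    (1 - r) * r ^ i * ((d i : ℕ) : ℝ) ∈ Icc 0 ((1 - r) * r ^ i) := by
  have hd : ((d i : ℕ) : ℝ) ≤ 1 := by exact_mod_cast Nat.lt_succ_iff.mp (d i).isLt
  have : 0 ≤ (1 - r) * r ^ i := mul_nonneg (by linarith) (pow_nonneg hr₀ i)
  exact ⟨by positivity, mul_le_of_le_one_right this hd⟩

theorem summable_cantorTerm (d : ℕ → Fin 2) :
    Summable fun i => (1 - r) * r ^ i * ((d i : ℕ) : ℝ) :=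
  .of_nonneg_of_le (fun i => (cantorTerm_mem_Icc hr₀ hr₁ d i).1)
    (fun i => (cantorTerm_mem_Icc hr₀ hr₁ d i).2)
    ((summable_geometric_of_lt_one hr₀ hr₁).mul_left _)

theorem cantorMap_mem_Icc (d : ℕ → Fin 2) : cantorMap r d ∈ Icc 0 1 := by
  refine ⟨tsum_nonneg fun i => (cantorTerm_mem_Icc hr₀ hr₁ d i).1, ?_⟩
  calc cantorMap r d ≤ ∑' i, (1 - r) * r ^ i :=
        (summable_cantorTerm hr₀ hr₁ d).tsum_le_tsum (fun i => (cantorTerm_mem_Icc hr₀ hr₁ d i).2)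
          ((summable_geometric_of_lt_one hr₀ hr₁).mul_left _)
    _ = 1 := by
        rw [tsum_mul_left, tsum_geometric_of_lt_one hr₀ hr₁, mul_inv_cancel₀ (by linarith)]

theorem cantorMap_eq_sum_add (d : ℕ → Fin 2) (n : ℕ) :
    cantorMap r d = ∑ i ∈ Finset.range n, (1 - r) * r ^ i * ((d i : ℕ) : ℝ) +
      r ^ n * cantorMap r (fun i => d (i + n)) := by
  rw [cantorMap, ← (summable_cantorTerm hr₀ hr₁ d).sum_add_tsum_nat_add n, cantorMap,
    ← tsum_mul_left]
  congr 2 with i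
  ring

theorem continuous_cantorMap : Continuous (cantorMap r) := by
  refine continuous_tsum (fun i => continuous_const.mul ?_)
    ((summable_geometric_of_lt_one hr₀ hr₁).mul_left (1 - r)) fun i d => ?_
  · exact (continuous_of_discreteTopology (f := fun k : Fin 2 => ((k : ℕ) : ℝ))).comp
      (continuous_apply i)
  · rw [Real.norm_of_nonneg (cantorTerm_mem_Icc hr₀ hr₁ d i).1]
    exact (cantorTerm_mem_Icc hr₀ hr₁ d i).2

theorem mul_pow_le_abs_cantorMap_sub {d d' : ℕ → Fin 2} {j : ℕ} (h : ∀ i < j, d i = d' i)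
    (hj : d j ≠ d' j) :
    (1 - 2 * r) * r ^ j ≤ |cantorMap r d - cantorMap r d'| := by
  wlog hd : d j = 1 generalizing d d'
  · rw [abs_sub_comm]
    exact this (fun i hi => (h i hi).symm) hj.symm (by omega)
  have hd' : d' j = 0 := by omega
  have hsum : ∑ i ∈ Finset.range j, (1 - r) * r ^ i * ((d i : ℕ) : ℝ) =
      ∑ i ∈ Finset.range j, (1 - r) * r ^ i * ((d' i : ℕ) : ℝ) :=
    Finset.sum_congr rfl fun i hi => by rw [h i (Finset.mem_range.mp hi)]
  rw [cantorMap_eq_sum_add hr₀ hr₁ d (j + 1), cantorMap_eq_sum_add hr₀ hr₁ d' (j + 1),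
    Finset.sum_range_succ, Finset.sum_range_succ, hsum, hd, hd', Fin.val_zero, Nat.cast_zero]
  have h₁ := (cantorMap_mem_Icc hr₀ hr₁ fun i => d (i + (j + 1))).1
  have h₂ := (cantorMap_mem_Icc hr₀ hr₁ fun i => d' (i + (j + 1))).2
  have hrj : 0 ≤ r ^ j := pow_nonneg hr₀ j
  refine le_trans ?_ (le_abs_self _)
  rw [pow_succ, Fin.val_one, Nat.cast_one]
  nlinarith [mul_nonneg (mul_nonneg hrj hr₀) h₁, mul_le_of_le_one_right (mul_nonneg hrj hr₀) h₂]

end CantorMap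

section CantorDimension

variable {r : ℝ} {θ : ℝ≥0} (hr₀ : 0 < r) (hr : r < 2⁻¹) (hrθ : r ^ (θ : ℝ) = 2⁻¹)
include hr₀ hr hrθ

theorem abs_ofDigits_sub_le_cantorMap (d d' : ℕ → Fin 2) :
    |Real.ofDigits d - Real.ofDigits d'| ≤
      (1 - 2 * r)⁻¹ ^ (θ : ℝ) * |cantorMap r d - cantorMap r d'| ^ (θ : ℝ) := by
  have hr₁ : r < 1 := by linarith
  have h2r : 0 < 1 - 2 * r := by linarith
  by_cases hdd : d = d'
  · subst hdd
    simp only [sub_self, abs_zero]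
    positivity
  have hex : ∃ i, d i ≠ d' i := by
    by_contra! H
    exact hdd (funext H)
  have hagree : ∀ i < Nat.find hex, d i = d' i := fun i hi => not_not.1 (Nat.find_min hex hi)
  have hsep := mul_pow_le_abs_cantorMap_sub hr₀.le hr₁ hagree (Nat.find_spec hex)
  calc |Real.ofDigits d - Real.ofDigits d'| ≤ ((2 : ℝ) ^ Nat.find hex)⁻¹ := by
        exact_mod_cast Real.abs_ofDigits_sub_ofDigits_le hagree
    _ = (r ^ Nat.find hex) ^ (θ : ℝ) := by
        rw [← Real.rpow_pow_comm hr₀.le, hrθ, inv_pow]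
    _ ≤ ((1 - 2 * r)⁻¹ * |cantorMap r d - cantorMap r d'|) ^ (θ : ℝ) := by
        refine Real.rpow_le_rpow (by positivity) ?_ θ.coe_nonneg
        rwa [le_inv_mul_iff₀ h2r]
    _ = _ := Real.mul_rpow (by positivity) (abs_nonneg _)

theorem le_dimH_range_cantorMap : (θ : ℝ≥0∞) ≤ dimH (range (cantorMap r)) := by
  have hθ : 0 < θ := pos_iff_ne_zero.2 (by rintro rfl; norm_num at hrθ)
  have hholder := dimH_range_le_of_dist_le (F := Real.ofDigits (b := 2)) (G := cantorMap r)
    (C := ((1 - 2 * r)⁻¹ ^ (θ : ℝ)).toNNReal) hθ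
    fun d d' => by
      rw [Real.dist_eq, Real.dist_eq,
        Real.coe_toNNReal _ (Real.rpow_nonneg (inv_nonneg.2 (by linarith)) _)]
      exact abs_ofDigits_sub_le_cantorMap hr₀ hr hrθ d d'
  have hone : 1 ≤ dimH (range (Real.ofDigits (b := 2))) := by
    calc (1 : ℝ≥0∞) = dimH (Icc (0 : ℝ) 1) := by
          rw [Real.dimH_of_nonempty_interior (by simp), Module.finrank_self, Nat.cast_one]
      _ ≤ _ := dimH_mono (Real.ofDigits_SurjOn (b := 2) one_lt_two).subset_range
  rw [← one_mul (θ : ℝ≥0∞), ← ENNReal.le_div_iff_mul_le (by simp [hθ.ne']) (by simp)]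
  exact hone.trans hholder

theorem hausdorffMeasure_range_cantorMap_le_one : μH[θ] (range (cantorMap r)) ≤ 1 := by
  have hr₁ : r < 1 := by linarith
  set s : ∀ n : ℕ, (Fin n → Fin 2) → ℝ :=
    fun n w => ∑ i : Fin n, (1 - r) * r ^ (i : ℕ) * ((w i : ℕ) : ℝ)
  have hcover : ∀ n, range (cantorMap r) ⊆ ⋃ w, Icc (s n w) (s n w + r ^ n) := fun n => by
    rintro _ ⟨d, rfl⟩
    have hs : s n (fun i => d i) = ∑ i ∈ Finset.range n, (1 - r) * r ^ i * ((d i : ℕ) : ℝ) :=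
      Fin.sum_univ_eq_sum_range (fun i => (1 - r) * r ^ i * ((d i : ℕ) : ℝ)) n
    have htail := cantorMap_mem_Icc hr₀.le hr₁ fun i => d (i + n)
    refine mem_iUnion.2 ⟨fun i => d i, ?_⟩
    rw [hs, cantorMap_eq_sum_add hr₀.le hr₁ d n]
    have hrn := (pow_pos hr₀ n).le
    constructor <;> nlinarith [mul_nonneg hrn htail.1, mul_le_of_le_one_right hrn htail.2]
  have hdiam : ∀ n w, ediam (Icc (s n w) (s n w + r ^ n)) = ENNReal.ofReal (r ^ n) := by
    intro n w
    rw [Real.ediam_Icc, add_sub_cancel_left]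
  have hsum : ∀ n, ∑ w, ediam (Icc (s n w) (s n w + r ^ n)) ^ (θ : ℝ) = 1 := by
    intro n
    simp only [hdiam, Finset.sum_const, Finset.card_univ, Fintype.card_fun, Fintype.card_fin,
      nsmul_eq_mul]
    rw [ENNReal.ofReal_rpow_of_nonneg (by positivity) θ.coe_nonneg, ← Real.rpow_pow_comm hr₀.le,
      hrθ, ENNReal.ofReal_pow (by norm_num), ENNReal.ofReal_inv_of_pos two_pos,
      ENNReal.ofReal_ofNat]
    push_cast
    rw [← mul_pow, ENNReal.mul_inv_cancel two_ne_zero ENNReal.ofNat_ne_top, one_pow]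
  have hlim : Tendsto (fun n => ENNReal.ofReal (r ^ n)) atTop (𝓝 0) := by
    simpa using ENNReal.tendsto_ofReal (tendsto_pow_atTop_nhds_zero_of_lt_one hr₀.le hr₁)
  calc μH[θ] (range (cantorMap r))
      ≤ liminf (fun n => ∑ w, ediam (Icc (s n w) (s n w + r ^ n)) ^ (θ : ℝ)) atTop :=
        Measure.hausdorffMeasure_le_liminf_sum _ _ _ hlim _
          (Eventually.of_forall fun n w => (hdiam n w).le) (Eventually.of_forall hcover)
    _ = 1 := by simp only [hsum, liminf_const]

theorem dimH_range_cantorMap : dimH (range (cantorMap r)) = θ :=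
  le_antisymm (dimH_le_of_hausdorffMeasure_ne_top
    (ne_top_of_le_ne_top ENNReal.one_ne_top (hausdorffMeasure_range_cantorMap_le_one hr₀ hr hrθ)))
    (le_dimH_range_cantorMap hr₀ hr hrθ)

end CantorDimension

theorem exists_isClosed_subset_Icc_volume_ne_zero {a b : ℝ} (hab : a < b) :
    ∃ K : Set ℝ, IsClosed K ∧ interior K = ∅ ∧ K ⊆ Icc a b ∧ volume K ≠ 0 := by
  set q := TopologicalSpace.denseSeq ℝ
  set ρ : ℕ → ℝ := fun k => (b - a) / 8 * 2⁻¹ ^ k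
  set U := ⋃ k, ball (q k) (ρ k)
  have hρ : ∀ k, 0 < ρ k := fun k => by simp only [ρ]; have := sub_pos.2 hab; positivity
  have hU : volume U ≤ ENNReal.ofReal ((b - a) / 2) := by
    calc volume U ≤ ∑' k, volume (ball (q k) (ρ k)) := measure_iUnion_le _
      _ = ENNReal.ofReal (∑' k, 2 * ρ k) := by
          simp only [Real.volume_ball]
          rw [ENNReal.ofReal_tsum_of_nonneg (fun k => (mul_pos two_pos (hρ k)).le)
            (((summable_geometric_of_lt_one (r := (2 : ℝ)⁻¹) (by norm_num)
              (by norm_num)).mul_left ((b - a) / 8)).mul_left 2)]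
      _ = ENNReal.ofReal ((b - a) / 2) := by
          simp only [ρ]
          rw [tsum_mul_left, tsum_mul_left, tsum_geometric_inv_two]
          ring_nf
  refine ⟨Icc a b \ U, isClosed_Icc.sdiff (isOpen_iUnion fun k => isOpen_ball), ?_,
    sdiff_subset, ?_⟩
  · rw [interior_eq_empty_iff_dense_compl]
    refine (TopologicalSpace.denseRange_denseSeq ℝ).mono ?_
    rintro _ ⟨k, rfl⟩ hk
    exact hk.2 (mem_iUnion.2 ⟨k, mem_ball_self (hρ k)⟩)
  · refine ((tsub_pos_of_lt ?_).trans_le le_measure_sdiff).ne'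
    rw [Real.volume_Icc]
    exact hU.trans_lt ((ENNReal.ofReal_lt_ofReal_iff (by linarith)).2 (by linarith))

theorem exists_isClosed_subset_Icc_dimH_eq_of_lt_one {a b : ℝ} (hab : a < b) {θ : ℝ}
    (hθ₀ : 0 < θ) (hθ₁ : θ < 1) :
    ∃ K : Set ℝ, K.Nonempty ∧ IsClosed K ∧ interior K = ∅ ∧ K ⊆ Icc a b ∧
      dimH K = ENNReal.ofReal θ := by
  set r : ℝ := 2⁻¹ ^ θ⁻¹
  have hr₀ : 0 < r := by positivity
  have hr : r < 2⁻¹ := by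
    simpa using Real.rpow_lt_rpow_of_exponent_gt (by norm_num : (0 : ℝ) < 2⁻¹) (by norm_num)
      ((one_lt_inv₀ hθ₀).2 hθ₁)
  have hrθ : r ^ (θ.toNNReal : ℝ) = 2⁻¹ := by
    rw [Real.coe_toNNReal _ hθ₀.le, ← Real.rpow_mul (by norm_num), inv_mul_cancel₀ hθ₀.ne',
      Real.rpow_one]
  set K := (fun x => a + (b - a) * x) '' range (cantorMap r)
  have hdim : dimH K = ENNReal.ofReal θ := by
    rw [dimH_image_const_add_mul a (sub_pos.2 hab).ne', dimH_range_cantorMap hr₀ hr hrθ]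
    rfl
  refine ⟨K, (range_nonempty _).image _,
    ((isCompact_range (continuous_cantorMap hr₀.le (by linarith))).image (by fun_prop)).isClosed,
    ?_, ?_, hdim⟩
  · rw [interior_eq_empty_iff_dense_compl]
    refine dense_compl_of_dimH_lt_finrank ?_
    rw [hdim, Module.finrank_self, Nat.cast_one]
    exact ENNReal.ofReal_lt_one.2 hθ₁
  · rintro _ ⟨_, ⟨d, rfl⟩, rfl⟩
    have := cantorMap_mem_Icc hr₀.le (by linarith) d
    constructor <;> nlinarith [this.1, this.2]

theorem exists_isClosed_subset_Icc_dimH_eq {a b : ℝ} (hab : a < b) {θ : ℝ}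
    (hθ : θ ∈ Icc (0 : ℝ) 1) :
    ∃ K : Set ℝ, K.Nonempty ∧ IsClosed K ∧ interior K = ∅ ∧ K ⊆ Icc a b ∧
      dimH K = ENNReal.ofReal θ := by
  rcases hθ.1.eq_or_lt with rfl | hθ₀
  · exact ⟨{a}, singleton_nonempty a, isClosed_singleton, interior_singleton a,
      singleton_subset_iff.2 (left_mem_Icc.2 hab.le), by simp⟩
  rcases hθ.2.eq_or_lt with rfl | hθ₁
  · obtain ⟨K, hKcl, hKint, hKab, hKvol⟩ := exists_isClosed_subset_Icc_volume_ne_zero hab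
    exact ⟨K, nonempty_of_measure_ne_zero hKvol, hKcl, hKint, hKab,
      by simpa using Real.dimH_eq_one_of_volume_ne_zero hKvol⟩
  exact exists_isClosed_subset_Icc_dimH_eq_of_lt_one hab hθ₀ hθ₁

noncomputable def spike (n : ℕ) (t : ℝ) : ℝ := n / (1 + n * t)

section Spike

variable (n : ℕ) {t : ℝ}

theorem spike_zero : spike n 0 = n := by simp [spike]

theorem spike_nonneg (ht : 0 ≤ t) : 0 ≤ spike n t := by unfold spike; positivity

theorem spike_le_succ (ht : 0 ≤ t) : spike n t ≤ spike (n + 1) t := by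
  unfold spike
  rw [div_le_div_iff₀ (by positivity) (by positivity)]
  push_cast
  nlinarith

theorem spike_le_inv (ht : 0 < t) : spike n t ≤ t⁻¹ := by
  unfold spike
  rw [div_le_iff₀ (by positivity)]
  calc (n : ℝ) = t⁻¹ * (n * t) := by field_simp
    _ ≤ t⁻¹ * (1 + n * t) := by gcongr; linarith

theorem Continuous.spike {f : ℝ → ℝ} (hf : Continuous f) (h0 : ∀ x, 0 ≤ f x) :
    Continuous fun x => spike n (f x) :=
  continuous_const.div (continuous_const.add (continuous_const.mul hf))
    fun x => (add_pos_of_pos_of_nonneg one_pos (mul_nonneg n.cast_nonneg (h0 x))).ne'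

theorem integral_spike {L : ℝ} (hL : 0 ≤ L) :
    ∫ t in (0)..L, spike n t = Real.log (1 + n * L) := by
  have hpos : ∀ t ∈ uIcc 0 L, 0 < 1 + n * t := fun t ht => by
    rw [uIcc_of_le hL] at ht
    have := ht.1
    positivity
  have hderiv : ∀ t ∈ uIcc 0 L, HasDerivAt (fun t => Real.log (1 + n * t)) (spike n t) t :=
    fun t ht => by
      have := ((hasDerivAt_id t).const_mul (n : ℝ)).const_add 1 |>.log (hpos t ht).ne'
      simpa [spike] using this
  rw [intervalIntegral.integral_eq_sub_of_hasDerivAt hderiv, mul_zero, add_zero, Real.log_one,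
    sub_zero]
  exact (ContinuousOn.div continuousOn_const (by fun_prop) fun t ht => (hpos t ht).ne')
    |>.intervalIntegrable

end Spike

noncomputable def maxFamily (K : Set ℝ) (q : ℕ → ℝ) (n : ℕ) (x : ℝ) : ℝ :=
  spike n (infDist x K) + ∑ k ∈ Finset.range n, (4 : ℝ)⁻¹ ^ k * spike n |x - q k|

section MaxFamily

variable (K : Set ℝ) (q : ℕ → ℝ)

theorem continuous_maxFamily (n : ℕ) : Continuous (maxFamily K q n) :=
  ((continuous_infDist_pt K).spike n fun _ => infDist_nonneg).add <|
    continuous_finsetSum _ fun _ _ => continuous_const.mul <|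
      (continuous_id.sub continuous_const).abs.spike n fun _ => abs_nonneg _

theorem maxFamily_le_succ (n : ℕ) (x : ℝ) : maxFamily K q n x ≤ maxFamily K q (n + 1) x := by
  refine add_le_add (spike_le_succ n infDist_nonneg) ?_
  rw [Finset.sum_range_succ]
  refine le_add_of_le_of_nonneg (Finset.sum_le_sum fun k _ => ?_) ?_
  · exact mul_le_mul_of_nonneg_left (spike_le_succ n (abs_nonneg _)) (by positivity)
  · exact mul_nonneg (by positivity) (spike_nonneg _ (abs_nonneg _))

theorem sum_spike_nonneg (n : ℕ) (x : ℝ) :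
    0 ≤ ∑ k ∈ Finset.range n, (4 : ℝ)⁻¹ ^ k * spike n |x - q k| :=
  Finset.sum_nonneg fun _ _ => mul_nonneg (by positivity) (spike_nonneg n (abs_nonneg _))

theorem maxFamily_nonneg (n : ℕ) (x : ℝ) : 0 ≤ maxFamily K q n x :=
  add_nonneg (spike_nonneg n infDist_nonneg) (sum_spike_nonneg q n x)

theorem spike_le_maxFamily {n k : ℕ} (hk : k < n) (x : ℝ) :
    (4 : ℝ)⁻¹ ^ k * spike n |x - q k| ≤ maxFamily K q n x := by
  refine le_add_of_nonneg_of_le (spike_nonneg n infDist_nonneg) ?_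
  exact Finset.single_le_sum (f := fun k => (4 : ℝ)⁻¹ ^ k * spike n |x - q k|)
    (fun _ _ => mul_nonneg (by positivity) (spike_nonneg n (abs_nonneg _)))
    (Finset.mem_range.2 hk)

theorem tendsto_maxFamily_of_mem {x : ℝ} (hx : x ∈ K) :
    Tendsto (fun n => maxFamily K q n x) atTop atTop := by
  refine tendsto_atTop_mono (fun n => ?_) tendsto_natCast_atTop_atTop
  rw [maxFamily, infDist_zero_of_mem hx, spike_zero]
  exact le_add_of_nonneg_right (sum_spike_nonneg q n x)

theorem tendsto_integral_maxFamily (hq : DenseRange q) {x y : ℝ} (hxy : x < y) :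
    Tendsto (fun n => ∫ t in x..y, maxFamily K q n t) atTop atTop := by
  obtain ⟨_, ⟨k, rfl⟩, hxk, hky⟩ := hq.exists_between hxy
  have hlower : ∀ n, k < n →
      (4 : ℝ)⁻¹ ^ k * Real.log (1 + n * (y - q k)) ≤ ∫ t in x..y, maxFamily K q n t := by
    intro n hn
    have hint : ∀ a b, IntervalIntegrable (maxFamily K q n) volume a b := fun a b =>
      (continuous_maxFamily K q n).intervalIntegrable a b
    calc (4 : ℝ)⁻¹ ^ k * Real.log (1 + n * (y - q k))
        = ∫ t in q k..y, (4 : ℝ)⁻¹ ^ k * spike n |t - q k| := by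
          rw [intervalIntegral.integral_const_mul, ← integral_spike n (sub_nonneg.2 hky.le),
            ← sub_self (q k), ← intervalIntegral.integral_comp_sub_right]
          refine congrArg _ (intervalIntegral.integral_congr fun t ht => ?_)
          rw [uIcc_of_le hky.le] at ht
          simp only [abs_of_nonneg (sub_nonneg.2 ht.1)]
      _ ≤ ∫ t in q k..y, maxFamily K q n t :=
          intervalIntegral.integral_mono_on hky.le
            ((continuous_const.mul ((continuous_id.sub continuous_const).abs.spike n
              fun _ => abs_nonneg _)).intervalIntegrable _ _)
            (hint _ _) fun t _ => spike_le_maxFamily K q hn t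
      _ ≤ ∫ t in x..y, maxFamily K q n t :=
          intervalIntegral.integral_mono_interval hxk.le hky.le le_rfl
            (Eventually.of_forall fun t => maxFamily_nonneg K q n t) (hint _ _)
  refine tendsto_atTop_mono' atTop (eventually_gt_atTop k |>.mono hlower) ?_
  refine Tendsto.const_mul_atTop (by positivity) (Real.tendsto_log_atTop.comp ?_)
  exact tendsto_atTop_add_const_left _ _
    (tendsto_natCast_atTop_atTop.atTop_mul_const (sub_pos.2 hky))

theorem bddAbove_maxFamily (hKne : K.Nonempty) (hKcl : IsClosed K) {x : ℝ} (hxK : x ∉ K)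
    (hxq : x ∉ range q) (hxE : x ∉ limsup (fun k => closedBall (q k) ((2 : ℝ)⁻¹ ^ k)) atTop) :
    BddAbove (range fun n => maxFamily K q n x) := by
  have hK : 0 < infDist x K := (hKcl.notMem_iff_infDist_pos hKne).1 hxK
  have hq : ∀ k, 0 < |x - q k| := fun k => abs_pos.2 (sub_ne_zero.2 fun h => hxq ⟨k, h.symm⟩)
  have hfar : ∀ᶠ k in atTop, (2 : ℝ)⁻¹ ^ k < |x - q k| := by
    rw [mem_limsup_iff_frequently_mem, not_frequently] at hxE
    exact hxE.mono fun k hk => by simpa [Real.dist_eq] using hk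
  have hsum : Summable fun k => (4 : ℝ)⁻¹ ^ k * |x - q k|⁻¹ := by
    refine .of_norm_bounded_eventually_nat (summable_geometric_of_lt_one (r := (2 : ℝ)⁻¹)
      (by norm_num) (by norm_num)) (hfar.mono fun k hk => ?_)
    rw [Real.norm_of_nonneg (by positivity), ← div_eq_mul_inv, div_le_iff₀ (hq k)]
    calc (4 : ℝ)⁻¹ ^ k = 2⁻¹ ^ k * 2⁻¹ ^ k := by rw [← mul_pow]; norm_num
      _ ≤ 2⁻¹ ^ k * |x - q k| := by gcongr
  refine ⟨(infDist x K)⁻¹ + ∑' k, (4 : ℝ)⁻¹ ^ k * |x - q k|⁻¹, ?_⟩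
  rintro _ ⟨n, rfl⟩
  refine add_le_add (spike_le_inv n hK) ((Finset.sum_le_sum fun k _ => ?_).trans
    (hsum.sum_le_tsum _ fun k _ => by positivity))
  exact mul_le_mul_of_nonneg_left (spike_le_inv n (hq k)) (by positivity)

end MaxFamily

theorem isMaxFamily_maxFamily (I K : Set ℝ) {q : ℕ → ℝ} (hq : DenseRange q) :
    IsMaxFamily I (maxFamily K q) :=
  ⟨fun n => (continuous_maxFamily K q n).continuousOn, fun n x _ => maxFamily_le_succ K q n x,
    fun _ _ _ _ hxy => tendsto_integral_maxFamily K q hq hxy⟩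

theorem subset_limSet_maxFamily {I K : Set ℝ} (hKI : K ⊆ I) (q : ℕ → ℝ) :
    K ⊆ limSet I (maxFamily K q) :=
  fun _ hx => ⟨hKI hx, tendsto_maxFamily_of_mem K q hx⟩

theorem limSet_maxFamily_diff_subset (I : Set ℝ) {K : Set ℝ} (hKne : K.Nonempty)
    (hKcl : IsClosed K) (q : ℕ → ℝ) :
    limSet I (maxFamily K q) \ K ⊆
      range q ∪ limsup (fun k => closedBall (q k) ((2 : ℝ)⁻¹ ^ k)) atTop := by
  rintro x ⟨⟨-, hx⟩, hxK⟩
  by_contra hxB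
  rw [mem_union, not_or] at hxB
  obtain ⟨M, hM⟩ := bddAbove_maxFamily K q hKne hKcl hxK hxB.1 hxB.2
  obtain ⟨n, hn⟩ := (hx.eventually_gt_atTop M).exists
  exact hn.not_ge (hM ⟨n, rfl⟩)

/-- For every nondegenerate interval `I` and every `θ ∈ [0,1]` there is a max-family `(f_n)`
with `dim_H I_f = θ` such that `I_f` decomposes into a set nowhere dense in `I` and a set of
Hausdorff dimension zero. -/
theorem stmt_12 (I : Set ℝ) (hI : I.OrdConnected) (hInt : I.Nontrivial)
    (θ : ℝ) (hθ : θ ∈ Icc (0 : ℝ) 1) :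
    ∃ f : ℕ → ℝ → ℝ, IsMaxFamily I f ∧
      dimH (limSet I f) = ENNReal.ofReal θ ∧
      ∃ A B : Set ℝ, limSet I f = A ∪ B ∧
        IsNowhereDense ((Subtype.val ⁻¹' A : Set I)) ∧
        dimH B = 0 := by
  obtain ⟨a, haI, b, hbI, hab⟩ := hInt.exists_lt
  obtain ⟨K, hKne, hKcl, hKint, hKab, hKdim⟩ := exists_isClosed_subset_Icc_dimH_eq hab hθ
  set q := TopologicalSpace.denseSeq ℝ
  set f := maxFamily K q
  have hKf : K ⊆ limSet I f := subset_limSet_maxFamily (hKab.trans (hI.out haI hbI)) q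
  have hB : dimH (limSet I f \ K) = 0 := by
    refine nonpos_iff_eq_zero.1 ((dimH_mono (limSet_maxFamily_diff_subset I hKne hKcl q)).trans ?_)
    rw [dimH_union, dimH_countable (countable_range q), dimH_limsup_closedBall_two_inv_pow,
      max_self]
  refine ⟨f, isMaxFamily_maxFamily I K (TopologicalSpace.denseRange_denseSeq ℝ), ?_, K,
    limSet I f \ K, (union_sdiff_cancel hKf).symm,
    (hKcl.isNowhereDense_iff.2 hKint).preimage_val (hI.subset_closure_interior hInt), hB⟩
  rw [← union_sdiff_cancel hKf, dimH_union, hB, hKdim, max_eq_left zero_le]
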